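/- Let p be an odd prime and F : F_{p^n} → F_{p^n} quadratic with n ≥ 4, such that for every nonzero b ∈ F_{p^n} the linear kernel LK_{Tr(bF)} = {γ : x ↦ Tr(b(F(x+γ)-F(x))) is constant} has dimension at most n-2 over F_p (equivalently |W_F| ≤ p^{n-1}). Then for any α ∈ F_{p^n} and any nonzero β ∈ F_{p^n}, the F_p-valued function x ↦ Tr(αx + βF(x))² has algebraic degree exactly 4. -/

import Mathlib

/-!
The bound `4` is the product rule for discrete derivatives. For the lower bound let
`h = Tr(βF)`, a quadratic function with polar form `B(a, b) = h(a + b) - h a - h b + h 0`,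
whose linear kernel is the radical of `B`. As `Tr(αx)` is linear, `(Tr(αx) + h)²` has degree
at most `3` only if `h²` does, and then the fourth difference of `h²` in the directions
`a, a, b, b` gives `B(a,a) B(b,b) + 2 B(a,b)² = 0`, since `p` is odd. So `B = 0` if
`B(a, a) = 0` for all `a`, and otherwise the hyperplane `B(a, ·) = 0` of an `a` with
`B(a, a) ≠ 0` lies in the radical. Either way the linear kernel has dimension at least `n - 1`.
-/

/-- A function has algebraic degree at most `d` iff all `(d+1)`-fold discrete
derivatives vanish identically. -/
def degLE {V W : Type*} [AddCommGroup V] [AddCommGroup W] : (V → W) → ℕ → Prop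
  | F, 0 => ∀ γ x, F (x + γ) - F x = 0
  | F, (d + 1) => ∀ γ, degLE (fun x => F (x + γ) - F x) d

section AddCommGroup

variable {V W U : Type*} [AddCommGroup V] [AddCommGroup W] [AddCommGroup U]

theorem degLE_congr {f g : V → W} {d : ℕ} (h : ∀ x, f x = g x) (hf : degLE f d) :
    degLE g d :=
  funext h ▸ hf

theorem degLE_add : ∀ {d : ℕ} {f g : V → W}, degLE f d → degLE g d →
    degLE (fun x => f x + g x) d
  | 0, _, _, hf, hg => fun γ x => by
    beta_reduce
    rw [add_sub_add_comm, hf γ x, hg γ x, add_zero]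
  | _ + 1, _, _, hf, hg => fun γ =>
    degLE_congr (fun x => by beta_reduce; abel) (degLE_add (hf γ) (hg γ))

theorem degLE_map (T : W →+ U) : ∀ {d : ℕ} {f : V → W}, degLE f d →
    degLE (fun x => T (f x)) d
  | 0, _, hf => fun γ x => by
    beta_reduce
    rw [← map_sub, hf γ x, map_zero]
  | _ + 1, _, hf => fun γ =>
    degLE_congr (fun x => by beta_reduce; rw [map_sub]) (degLE_map T (hf γ))

theorem degLE_sub {d : ℕ} {f g : V → W} (hf : degLE f d) (hg : degLE g d) :
    degLE (fun x => f x - g x) d :=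
  degLE_congr (fun _ => (sub_eq_add_neg _ _).symm) (degLE_add hf (degLE_map negAddMonoidHom hg))

theorem degLE_succ : ∀ {d : ℕ} {f : V → W}, degLE f d → degLE f (d + 1)
  | 0, _, hf => fun γ δ x => by
    beta_reduce
    rw [sub_eq_zero.mp (hf γ (x + δ)), sub_eq_zero.mp (hf γ x), sub_self, sub_self, sub_self]
  | _ + 1, _, hf => fun γ => degLE_succ (hf γ)

theorem degLE_comp_add_right : ∀ {d : ℕ} {f : V → W} (γ : V), degLE f d →
    degLE (fun x => f (x + γ)) d
  | 0, _, γ, hf => fun δ x => by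
    beta_reduce
    rw [add_right_comm]
    exact hf δ (x + γ)
  | _ + 1, _, γ, hf => fun δ =>
    degLE_congr (fun x => by rw [add_right_comm]) (degLE_comp_add_right γ (hf δ))

theorem AddMonoidHom.degLE_one (φ : V →+ W) : degLE φ 1 := fun γ δ x => by
  simp only [map_add]
  abel

def polar (h : V → W) (a b : V) : W := h (a + b) - h a - h b + h 0

theorem polar_comm (h : V → W) (a b : V) : polar h a b = polar h b a := by
  simp only [polar, add_comm a b]
  abel

theorem third_difference_eq_zero {h : V → W} (hh : degLE h 2) (u v w : V) :
    h (u + v + w) - h (u + v) - h (u + w) - h (v + w) + h u + h v + h w - h 0 = 0 := by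
  have := hh w v u 0
  simp only [zero_add] at this
  linear_combination (norm := abel) this

theorem polar_add_left {h : V → W} (hh : degLE h 2) (u v w : V) :
    polar h (u + v) w = polar h u w + polar h v w := by
  simp only [polar]
  linear_combination (norm := abel) third_difference_eq_zero hh u v w

theorem polar_add_right {h : V → W} (hh : degLE h 2) (u v w : V) :
    polar h u (v + w) = polar h u v + polar h u w := by
  rw [polar_comm, polar_add_left hh, polar_comm h v, polar_comm h w]

theorem polar_add_add {h : V → W} (hh : degLE h 2) (u v : V) :
    polar h (u + v) (u + v) = polar h u u + polar h v v + 2 • polar h u v := by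
  rw [polar_add_left hh, polar_add_right hh, polar_add_right hh, polar_comm h v u]
  abel

def linearKernel (h : V → W) : Set V := {γ | ∃ c : W, ∀ x, h (x + γ) - h x = c}

theorem mem_linearKernel_iff {h : V → W} {γ : V} :
    γ ∈ linearKernel h ↔ ∀ x, polar h γ x = 0 := by
  constructor
  · rintro ⟨c, hc⟩ x
    have h0 := hc 0
    rw [zero_add] at h0
    rw [polar, add_comm γ x]
    linear_combination (norm := abel) hc x - h0
  · intro hγ
    refine ⟨h γ - h 0, fun x => ?_⟩
    have := hγ x
    rw [polar, add_comm γ x] at this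
    linear_combination (norm := abel) this

end AddCommGroup

section CommRing

variable {V R : Type*} [AddCommGroup V] [CommRing R]

theorem degLE_const_mul (c : R) {d : ℕ} {f : V → R} (hf : degLE f d) :
    degLE (fun x => c * f x) d :=
  degLE_map (AddMonoidHom.mulLeft c) hf

theorem degLE_mul_of_degLE_zero {d : ℕ} {f g : V → R} (hf : degLE f 0) (hg : degLE g d) :
    degLE (fun x => f x * g x) d := by
  have hconst : ∀ x, f x = f 0 := fun x => by simpa [sub_eq_zero] using hf x 0
  exact degLE_congr (fun x => by rw [hconst x]) (degLE_const_mul (f 0) hg)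

theorem degLE_mul : ∀ {a b : ℕ} {f g : V → R}, degLE f a → degLE g b →
    degLE (fun x => f x * g x) (a + b)
  | 0, b, _, _, hf, hg => (zero_add b).symm ▸ degLE_mul_of_degLE_zero hf hg
  | _ + 1, 0, _, _, hf, hg => degLE_congr (fun x => mul_comm _ _) (degLE_mul_of_degLE_zero hg hf)
  | a + 1, b + 1, f, g, hf, hg => fun γ => by
    have hleft : degLE (fun x => (f (x + γ) - f x) * g (x + γ)) (a + (b + 1)) :=
      degLE_mul (hf γ) (degLE_comp_add_right γ hg)
    have hprod : degLE (fun x => (f (x + γ) - f x) * g (x + γ) + f x * (g (x + γ) - g x))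
        (a + 1 + b) :=
      degLE_add (by rw [Nat.add_right_comm]; exact hleft) (degLE_mul hf (hg γ))
    exact degLE_congr (fun x => by ring) hprod

theorem degLE_sq_of_degLE_sq_add {L h : V → R} (hL : degLE L 1) (hh : degLE h 2)
    (hsq : degLE (fun x => (L x + h x) ^ 2) 3) : degLE (fun x => h x ^ 2) 3 := by
  have hL2 : degLE (fun x => L x ^ 2) 3 :=
    degLE_succ (degLE_congr (fun x => (sq (L x)).symm) (degLE_mul hL hL))
  have hLh : degLE (fun x => 2 * (L x * h x)) 3 := degLE_const_mul 2 (degLE_mul hL hh)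
  exact degLE_congr (fun x => by ring) (degLE_sub (degLE_sub hsq hL2) hLh)

/-- The left-hand side is the fourth difference of `h²` at `0` in the directions `a, a, b, b`. -/
theorem polar_relation_of_degLE_sq {h : V → R} (hh : degLE h 2)
    (hsq : degLE (fun x => h x ^ 2) 3) (a b : V) :
    2 * (polar h a a * polar h b b + 2 * polar h a b ^ 2) = 0 := by
  have v2 : h (b + a + a) = 2 * h (b + a) + h (a + a) - h b - 2 * h a + h 0 := by
    linear_combination third_difference_eq_zero hh b a a
  have v3 : h (b + b + a) = h (b + b) + 2 * h (b + a) - 2 * h b - h a + h 0 := by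
    linear_combination third_difference_eq_zero hh b b a
  have v4 : h (b + b + a + a) = 2 * h (b + b + a) + h (a + a) - h (b + b) - 2 * h a + h 0 := by
    linear_combination third_difference_eq_zero hh (b + b) a a
  have E := hsq a a b b 0
  simp only [zero_add] at E
  rw [v4, v3, v2] at E
  simp only [polar, add_comm a b]
  linear_combination E

end CommRing

section NoZeroDivisors

variable {V R : Type*} [AddCommGroup V] [CommRing R] [NoZeroDivisors R] {h : V → R}

theorem polar_eq_zero_of_forall_polar_self_eq_zero (h2 : (2 : R) ≠ 0) (hh : degLE h 2)
    (hsq : degLE (fun x => h x ^ 2) 3) (hiso : ∀ a, polar h a a = 0) (a b : V) :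
    polar h a b = 0 := by
  have := polar_relation_of_degLE_sq hh hsq a b
  rw [hiso a, hiso b] at this
  simpa [h2] using this

/-- If `B(a, a) ≠ 0`, the relation `B(a,a) B(b,b) + 2 B(a,b)² = 0` makes `B(b, b)` a function of
`B(a, b)` alone, so `B(w + c, w + c) = B(c, c)` and `B(w, w) = 0` when `B(a, w) = 0`. -/
theorem polar_eq_zero_of_orthogonal_of_anisotropic (h2 : (2 : R) ≠ 0) (hh : degLE h 2)
    (hsq : degLE (fun x => h x ^ 2) 3) {a w : V} (ha : polar h a a ≠ 0)
    (hw : polar h a w = 0) (c : V) : polar h w c = 0 := by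
  have rel : ∀ b, polar h a a * polar h b b + 2 * polar h a b ^ 2 = 0 := fun b =>
    (mul_eq_zero.mp (polar_relation_of_degLE_sq hh hsq a b)).resolve_left h2
  have hwc := rel (w + c)
  have hww := rel w
  rw [polar_add_add hh, polar_add_right hh, hw, zero_add, two_nsmul] at hwc
  rw [hw] at hww
  have key : 2 * polar h a a * polar h w c = 0 := by
    linear_combination hwc - hww - rel c
  simpa [h2, ha] using key

end NoZeroDivisors

theorem card_le_card_linearKernel_mul {p : ℕ} [Fact p.Prime] (hp : p ≠ 2)
    {V : Type*} [AddCommGroup V] [Finite V] {h : V → ZMod p} (hh : degLE h 2)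
    (hsq : degLE (fun x => h x ^ 2) 3) :
    Nat.card V ≤ Nat.card (linearKernel h) * p := by
  have h2 : (2 : ZMod p) ≠ 0 := Ring.two_ne_zero (by rwa [ZMod.ringChar_zmod_n])
  by_cases hiso : ∀ a, polar h a a = 0
  · have huniv : linearKernel h = Set.univ := Set.eq_univ_of_forall fun γ =>
      mem_linearKernel_iff.mpr (polar_eq_zero_of_forall_polar_self_eq_zero h2 hh hsq hiso γ)
    rw [huniv, Nat.card_univ]
    exact Nat.le_mul_of_pos_right _ (Fact.out : p.Prime).pos
  push Not at hiso
  obtain ⟨a, ha⟩ := hiso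
  let φ : V →+ ZMod p := AddMonoidHom.mk' (polar h a) (polar_add_right hh a)
  have hφ : Function.Surjective φ := fun c => ⟨(c / polar h a a).val • a, by
    change polar h a _ = c
    rw [← AddMonoidHom.mk'_apply (polar h a) (polar_add_right hh a), map_nsmul,
      AddMonoidHom.mk'_apply, nsmul_eq_mul, ZMod.natCast_zmod_val, div_mul_cancel₀ _ ha]⟩
  have hcard : Nat.card V = Nat.card φ.ker * p := by
    rw [← φ.ker.card_mul_index, AddSubgroup.index_ker, AddMonoidHom.range_eq_top.mpr hφ,
      AddSubgroup.card_top, Nat.card_zmod]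
  have hker : (φ.ker : Set V) ⊆ linearKernel h := fun w hw =>
    mem_linearKernel_iff.mpr (polar_eq_zero_of_orthogonal_of_anisotropic h2 hh hsq ha hw)
  rw [hcard]
  exact Nat.mul_le_mul_right p (Nat.card_mono (Set.toFinite _) hker)

/-- For odd `p` and quadratic `F` with every nonzero component function having linear
kernel of dimension at most `n-2` (equivalently `|W_F| ≤ p^{n-1}`), the function
`x ↦ Tr(αx + βF(x))²` has algebraic degree exactly `4`. -/
theorem square_has_degree_four
    (p n : ℕ) [Fact p.Prime] (hp : p ≠ 2) (hn : 4 ≤ n)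
    (F : GaloisField p n → GaloisField p n)
    (hquad : degLE F 2 ∧ ¬ degLE F 1)
    (hLK : ∀ b : GaloisField p n, b ≠ 0 →
      Nat.card {γ : GaloisField p n | ∃ c : ZMod p, ∀ x,
        Algebra.trace (ZMod p) (GaloisField p n) (b * (F (x + γ) - F x)) = c}
        ≤ p ^ (n - 2)) :
    ∀ (α : GaloisField p n) (β : GaloisField p n), β ≠ 0 →
      degLE (fun x => (Algebra.trace (ZMod p) (GaloisField p n) (α * x + β * F x)) ^ 2) 4
      ∧ ¬ degLE (fun x => (Algebra.trace (ZMod p) (GaloisField p n) (α * x + β * F x)) ^ 2) 3 := by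
  intro α β hβ
  set Tr := (Algebra.trace (ZMod p) (GaloisField p n)).toAddMonoidHom
  have hL : degLE (fun x => Tr (α * x)) 1 := (Tr.comp (AddMonoidHom.mulLeft α)).degLE_one
  have hh : degLE (fun x => Tr (β * F x)) 2 :=
    degLE_map (Tr.comp (AddMonoidHom.mulLeft β)) hquad.1
  have hq : degLE (fun x => Tr (α * x + β * F x)) 2 :=
    degLE_congr (fun x => (map_add Tr _ _).symm) (degLE_add (degLE_succ hL) hh)
  refine ⟨degLE_congr (fun x => (sq _).symm) (degLE_mul hq hq), fun h3 => ?_⟩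
  have hsq := degLE_sq_of_degLE_sq_add hL hh (degLE_congr (fun x => by rw [map_add]; rfl) h3)
  have hcard := card_le_card_linearKernel_mul hp hh hsq
  have hker : linearKernel (fun x => Tr (β * F x)) = {γ | ∃ c : ZMod p, ∀ x,
      Algebra.trace (ZMod p) (GaloisField p n) (β * (F (x + γ) - F x)) = c} := by
    simp only [linearKernel, mul_sub, map_sub]
    rfl
  rw [hker, GaloisField.card p n (by omega)] at hcard
  have hlt : p ^ (n - 2) * p < p ^ n := by
    rw [← pow_succ]
    exact Nat.pow_lt_pow_right (Fact.out : p.Prime).one_lt (by omega)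
  exact absurd (hcard.trans (Nat.mul_le_mul_right p (hLK β hβ))) (not_le.mpr hlt)
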